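/- The partition distance D satisfies the triangle inequality: D(P,P'') ≤ D(P,P') + D(P',P'') for all partitions P, P', P'' of a finite set V. -/

import Mathlib

/-- The minimum number of vertices to delete so that two partitions (given as setoids)
induce the same partition on the remaining vertices. -/
noncomputable def nD {V : Type*} [Fintype V] [DecidableEq V] (P P' : Setoid V) : ℕ :=
  sInf {k | ∃ S : Finset V, S.card = k ∧
    ∀ x y : V, x ∉ S → y ∉ S → (P.r x y ↔ P'.r x y)}

/-- The normalized partition distance `D(P,P') = n_D(P,P')/n`. -/
noncomputable def partDist {V : Type*} [Fintype V] [DecidableEq V] (P P' : Setoid V) : ℝ :=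
  (nD P P' : ℝ) / (Fintype.card V : ℝ)

section

variable {V : Type*} [Fintype V] [DecidableEq V]

theorem nD_le_card {P P' : Setoid V} {S : Finset V}
    (hS : ∀ x y : V, x ∉ S → y ∉ S → (P.r x y ↔ P'.r x y)) : nD P P' ≤ S.card :=
  Nat.sInf_le ⟨S, rfl, hS⟩

theorem exists_card_eq_nD (P P' : Setoid V) :
    ∃ S : Finset V, S.card = nD P P' ∧ ∀ x y : V, x ∉ S → y ∉ S → (P.r x y ↔ P'.r x y) :=
  Nat.sInf_mem (s := {k | ∃ S : Finset V, S.card = k ∧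
    ∀ x y : V, x ∉ S → y ∉ S → (P.r x y ↔ P'.r x y)})
    ⟨_, Finset.univ, rfl, fun x _ hx _ => absurd (Finset.mem_univ x) hx⟩

/-- Deleting the union of the two witness sets makes `P`, `P'` and `P''` all agree. -/
theorem nD_triangle (P P' P'' : Setoid V) : nD P P'' ≤ nD P P' + nD P' P'' := by
  obtain ⟨S, hS, hPP'⟩ := exists_card_eq_nD P P'
  obtain ⟨T, hT, hP'P''⟩ := exists_card_eq_nD P' P''
  calc nD P P'' ≤ (S ∪ T).card := nD_le_card fun x y hx hy => by
        simp only [Finset.mem_union, not_or] at hx hy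
        exact (hPP' x y hx.1 hy.1).trans (hP'P'' x y hx.2 hy.2)
    _ ≤ S.card + T.card := Finset.card_union_le S T
    _ = nD P P' + nD P' P'' := by rw [hS, hT]

end

theorem partDist_triangle_general {V : Type*} [Fintype V] [DecidableEq V]
    (P P' P'' : Setoid V) :
    partDist P P'' ≤ partDist P P' + partDist P' P'' := by
  rw [partDist, partDist, partDist, ← add_div]
  exact div_le_div_of_nonneg_right (mod_cast nD_triangle P P' P'') (Nat.cast_nonneg _)

/-- the partition distance satisfies the triangle inequality. -/
theorem partDist_triangle {V : Type*} [Fintype V] [DecidableEq V]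
    (hV : 1 ≤ Fintype.card V) (P P' P'' : Setoid V) :
    partDist P P'' ≤ partDist P P' + partDist P' P'' :=
  partDist_triangle_general P P' P''
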